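/- arXiv:1508.03448 — 2 statements merged into one kernel-verified Lean document; each statement's English description precedes it below -/
import Mathlib

section
/- Assume the level set {u ∈ ℝⁿ : Θ(u) ≤ Θ(u⁽⁰⁾)} is compact, and let (u⁽ʲ⁾) be generated by the B-semismooth Newton iteration (Armijo-damped iteration with the B-Newton direction, defined via the unmodified index sets) starting at u⁽⁰⁾, with Θ(u⁽ʲ⁾) > 0 for all j. Then: (i) if limsup_{j→∞} t_j > 0, the sequence (u⁽ʲ⁾) converges to a point u* with Θ(u*) = 0; (ii) if limsup_{j→∞} t_j = 0 and u* is an accumulation point of (u⁽ʲ⁾) at which the condition lim_{(u,v)→(u*,u*), u≠v} (Θ(u) − Θ(v) − Θ'(u*, u − v))/‖u − v‖₂ = 0 holds (where Θ'(u*, h) denotes the one-sided directional derivative of Θ at u* in direction h), then (u⁽ʲ⁾) converges to u* and Θ(u*) = 0. -/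
open scoped RealInnerProductSpace
open Filter Topology

noncomputable section

abbrev Euc (n : ℕ) := EuclideanSpace ℝ (Fin n)

variable {n : ℕ}

/-- Componentwise soft-thresholding operator `(S_{γw}(v))_k = sgn(v_k)·max(|v_k| − γw_k, 0)`. -/
def soft (γ : ℝ) (w : Fin n → ℝ) (v : Euc n) : Euc n :=
  WithLp.toLp 2 (fun k => Real.sign (v k) * max (|v k| - γ * w k) 0)

/-- The map `F(u) = u − S_{γw}(u − γ∇g(u))`. -/
def Fm (g : Euc n → ℝ) (γ : ℝ) (w : Fin n → ℝ) (u : Euc n) : Euc n :=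
  u - soft γ w (u - γ • gradient g u)

/-- The merit functional `Θ(u) = ‖F(u)‖₂²`. -/
def Th (g : Euc n → ℝ) (γ : ℝ) (w : Fin n → ℝ) (u : Euc n) : ℝ :=
  ‖Fm g γ w u‖ ^ 2

/-- The Hessian of `g` at `u`, applied to `d`: `∇²g(u)d`. -/
def hess (g : Euc n → ℝ) (u d : Euc n) : Euc n :=
  fderiv ℝ (gradient g) u d

/-- Standing assumptions on `g`: twice continuously differentiable, Lipschitz continuous
second derivative, and uniform bounds `c₁‖h‖² ≤ ⟨∇²g(u)h, h⟩ ≤ c₂‖h‖²`. -/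
structure Assump (n : ℕ) (g : Euc n → ℝ) (c₁ c₂ : ℝ) : Prop where
  contDiff : ContDiff ℝ 2 g
  lipHess : ∃ L : NNReal, LipschitzWith L fun u => fderiv ℝ (gradient g) u
  c1_pos : 0 < c₁
  c1_le_c2 : c₁ ≤ c₂
  lower : ∀ u h : Euc n, c₁ * ‖h‖ ^ 2 ≤ ⟪hess g u h, h⟫
  upper : ∀ u h : Euc n, ⟪hess g u h, h⟫ ≤ c₂ * ‖h‖ ^ 2

/-- `A⁺(u)`. -/
def Ap (g : Euc n → ℝ) (γ : ℝ) (w : Fin n → ℝ) (u : Euc n) : Set (Fin n) :=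
  {k | γ * gradient g u k + γ * w k < u k}

/-- `A⁻(u)`. -/
def Am (g : Euc n → ℝ) (γ : ℝ) (w : Fin n → ℝ) (u : Euc n) : Set (Fin n) :=
  {k | u k < γ * gradient g u k - γ * w k}

/-- `A(u) = A⁺(u) ∪ A⁻(u)`. -/
def Aset (g : Euc n → ℝ) (γ : ℝ) (w : Fin n → ℝ) (u : Euc n) : Set (Fin n) :=
  Ap g γ w u ∪ Am g γ w u

/-- `I°(u)`. -/
def Iz (g : Euc n → ℝ) (γ : ℝ) (w : Fin n → ℝ) (u : Euc n) : Set (Fin n) :=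
  {k | γ * gradient g u k - γ * w k < u k ∧ u k < γ * gradient g u k + γ * w k}

/-- `I⁺(u)`. -/
def Ipl (g : Euc n → ℝ) (γ : ℝ) (w : Fin n → ℝ) (u : Euc n) : Set (Fin n) :=
  {k | u k = γ * gradient g u k + γ * w k}

/-- `I⁻(u)`. -/
def Imi (g : Euc n → ℝ) (γ : ℝ) (w : Fin n → ℝ) (u : Euc n) : Set (Fin n) :=
  {k | u k = γ * gradient g u k - γ * w k}

/-- `A⁺₊(u)`. -/
def App (g : Euc n → ℝ) (γ : ℝ) (w : Fin n → ℝ) (u : Euc n) : Set (Fin n) :=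
  {k | γ * gradient g u k + γ * w k < u k ∧ u k < 0}

/-- `A⁻₋(u)`. -/
def Amm (g : Euc n → ℝ) (γ : ℝ) (w : Fin n → ℝ) (u : Euc n) : Set (Fin n) :=
  {k | 0 < u k ∧ u k < γ * gradient g u k - γ * w k}

/-- `I°₊(u)`. -/
def Izp (g : Euc n → ℝ) (γ : ℝ) (w : Fin n → ℝ) (u : Euc n) : Set (Fin n) :=
  {k | γ * gradient g u k - γ * w k < u k ∧ u k < γ * gradient g u k + γ * w k ∧
    γ * gradient g u k + γ * w k < 0}

/-- `I°₋(u)`. -/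
def Izm (g : Euc n → ℝ) (γ : ℝ) (w : Fin n → ℝ) (u : Euc n) : Set (Fin n) :=
  {k | 0 < γ * gradient g u k - γ * w k ∧ γ * gradient g u k - γ * w k < u k ∧
    u k < γ * gradient g u k + γ * w k}

/-- `Ā⁺(u) = A⁺(u) \ A⁺₊(u)`. -/
def ApBar (g : Euc n → ℝ) (γ : ℝ) (w : Fin n → ℝ) (u : Euc n) : Set (Fin n) :=
  Ap g γ w u \ App g γ w u

/-- `Ā⁻(u) = A⁻(u) \ A⁻₋(u)`. -/
def AmBar (g : Euc n → ℝ) (γ : ℝ) (w : Fin n → ℝ) (u : Euc n) : Set (Fin n) :=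
  Am g γ w u \ Amm g γ w u

/-- `Ā(u) = Ā⁺(u) ∪ Ā⁻(u)`. -/
def ABar (g : Euc n → ℝ) (γ : ℝ) (w : Fin n → ℝ) (u : Euc n) : Set (Fin n) :=
  ApBar g γ w u ∪ AmBar g γ w u

/-- `Ī°(u) = I°(u) \ (I°₊(u) ∪ I°₋(u))`. -/
def IzBar (g : Euc n → ℝ) (γ : ℝ) (w : Fin n → ℝ) (u : Euc n) : Set (Fin n) :=
  Iz g γ w u \ (Izp g γ w u ∪ Izm g γ w u)

/-- `Ī⁺(u) = I⁺(u) ∪ A⁺₊(u) ∪ I°₊(u)`. -/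
def IplBar (g : Euc n → ℝ) (γ : ℝ) (w : Fin n → ℝ) (u : Euc n) : Set (Fin n) :=
  Ipl g γ w u ∪ App g γ w u ∪ Izp g γ w u

/-- `Ī⁻(u) = I⁻(u) ∪ A⁻₋(u) ∪ I°₋(u)`. -/
def ImiBar (g : Euc n → ℝ) (γ : ℝ) (w : Fin n → ℝ) (u : Euc n) : Set (Fin n) :=
  Imi g γ w u ∪ Amm g γ w u ∪ Izm g γ w u

/-- `d` is a modified Newton direction at `u`. -/
def IsModDir (g : Euc n → ℝ) (γ : ℝ) (w : Fin n → ℝ) (u d : Euc n) : Prop :=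
  (∀ k ∈ ABar g γ w u, γ * hess g u d k = - Fm g γ w u k) ∧
  (∀ k ∈ IzBar g γ w u, d k = - u k) ∧
  (∀ k ∈ IplBar g γ w u, 0 ≤ d k + u k ∧ 0 ≤ γ * hess g u d k + Fm g γ w u k ∧
    (d k + u k) * (γ * hess g u d k + Fm g γ w u k) = 0) ∧
  (∀ k ∈ ImiBar g γ w u, d k + u k ≤ 0 ∧ γ * hess g u d k + Fm g γ w u k ≤ 0 ∧
    (d k + u k) * (γ * hess g u d k + Fm g γ w u k) = 0)

/-- `d` is a B-Newton direction at `u` (unmodified index sets). -/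
def IsBDir (g : Euc n → ℝ) (γ : ℝ) (w : Fin n → ℝ) (u d : Euc n) : Prop :=
  (∀ k ∈ Aset g γ w u, γ * hess g u d k = - Fm g γ w u k) ∧
  (∀ k ∈ Iz g γ w u, d k = - u k) ∧
  (∀ k ∈ Ipl g γ w u, 0 ≤ d k + u k ∧ 0 ≤ γ * hess g u d k + Fm g γ w u k ∧
    (d k + u k) * (γ * hess g u d k + Fm g γ w u k) = 0) ∧
  (∀ k ∈ Imi g γ w u, d k + u k ≤ 0 ∧ γ * hess g u d k + Fm g γ w u k ≤ 0 ∧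
    (d k + u k) * (γ * hess g u d k + Fm g γ w u k) = 0)

/-- `t = β^l` where `l` is the smallest nonnegative integer satisfying the Armijo inequality. -/
def ArmijoStepsize (g : Euc n → ℝ) (γ : ℝ) (w : Fin n → ℝ) (β σ : ℝ) (u d : Euc n)
    (t : ℝ) : Prop :=
  ∃ l : ℕ, t = β ^ l ∧
    Th g γ w (u + (β ^ l) • d) ≤ (1 - 2 * σ * β ^ l) * Th g γ w u ∧
    ∀ l' < l, ¬ (Th g γ w (u + (β ^ l') • d) ≤ (1 - 2 * σ * β ^ l') * Th g γ w u)

/-- The modified B-semismooth Newton iteration with Armijo damping. -/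
def ModIter (g : Euc n → ℝ) (γ : ℝ) (w : Fin n → ℝ) (β σ : ℝ)
    (useq dseq : ℕ → Euc n) (tseq : ℕ → ℝ) : Prop :=
  (∀ j, IsModDir g γ w (useq j) (dseq j)) ∧
  (∀ j, ArmijoStepsize g γ w β σ (useq j) (dseq j) (tseq j)) ∧
  (∀ j, useq (j + 1) = useq j + tseq j • dseq j)

/-- The B-semismooth Newton iteration (unmodified index sets) with Armijo damping. -/
def BIter (g : Euc n → ℝ) (γ : ℝ) (w : Fin n → ℝ) (β σ : ℝ)
    (useq dseq : ℕ → Euc n) (tseq : ℕ → ℝ) : Prop :=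
  (∀ j, IsBDir g γ w (useq j) (dseq j)) ∧
  (∀ j, ArmijoStepsize g γ w β σ (useq j) (dseq j) (tseq j)) ∧
  (∀ j, useq (j + 1) = useq j + tseq j • dseq j)

/-!
Along a B-Newton direction `d`, each component of `F` has right derivative `-F_k(u)` (checked
index set by index set), so `Θ` has right derivative `-2Θ(u)`. Moreover
`⟨γ∇²g(u)d + F(u), d + u⟩ = 0`, which together with `⟨∇²g(u)d, d⟩ ≥ c₁‖d‖²` bounds the directions
on the compact level set. If the steps do not tend to zero, infinitely many of them contract `Θ`
by the fixed factor `1 - σ limsup t_j`, so `Θ(u⁽ʲ⁾) → 0`. If they do, the trial step `t_j / β` was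
rejected for large `j`; the rejected decrease bounds the directional derivative of `Θ` at `u*`
from below, the right derivative `-2Θ` bounds it from above, and the strict differentiability
condition at `u*` transfers both bounds to the iterates, giving `(1 - σ)Θ(u*) ≤ 0`. In both cases
the iterates converge: the level set is compact and, `∇g` being strongly monotone, `F` has at most
one zero.
-/

open Set

theorem Real.sign_mul_max_abs_sub {c : ℝ} (hc : 0 ≤ c) (x : ℝ) :
    Real.sign x * max (|x| - c) 0 = max (x - c) 0 - max (-x - c) 0 := by
  rcases lt_trichotomy x 0 with hx | rfl | hx
  · rw [Real.sign_of_neg hx, abs_of_neg hx, max_eq_right (by linarith : x - c ≤ 0)]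
    ring
  · simp [max_eq_right (neg_nonpos.mpr hc)]
  · rw [Real.sign_of_pos hx, abs_of_pos hx, max_eq_right (by linarith : -x - c ≤ 0)]
    ring

section SoftThresholding

variable {n : ℕ} {g : Euc n → ℝ} {γ : ℝ} {w : Fin n → ℝ}

theorem soft_apply (hγw : ∀ k, 0 ≤ γ * w k) (v : Euc n) (k : Fin n) :
    soft γ w v k = max (v k - γ * w k) 0 - max (-v k - γ * w k) 0 :=
  Real.sign_mul_max_abs_sub (hγw k) (v k)

theorem continuous_soft (hγw : ∀ k, 0 ≤ γ * w k) : Continuous (soft γ w) := by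
  have h : soft γ w = fun v : Euc n =>
      WithLp.toLp 2 fun k => max (v k - γ * w k) 0 - max (-v k - γ * w k) 0 := by
    ext v k
    exact soft_apply hγw v k
  rw [h]
  refine (PiLp.continuous_toLp 2 _).comp (continuous_pi fun k => ?_)
  have hk : Continuous fun v : Euc n => v k := (EuclideanSpace.proj k).continuous
  fun_prop

theorem Fm_apply (hγw : ∀ k, 0 ≤ γ * w k) (u : Euc n) (k : Fin n) :
    Fm g γ w u k = u k - max (u k - γ * gradient g u k - γ * w k) 0
      + max (γ * gradient g u k - u k - γ * w k) 0 := by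
  simp only [Fm, PiLp.sub_apply, soft_apply hγw, PiLp.smul_apply, smul_eq_mul, neg_sub]
  ring

theorem continuous_Fm (hg : Continuous (gradient g)) (hγw : ∀ k, 0 ≤ γ * w k) :
    Continuous (Fm g γ w) := by
  have := continuous_soft hγw
  unfold Fm
  fun_prop

theorem continuous_Th (hg : Continuous (gradient g)) (hγw : ∀ k, 0 ≤ γ * w k) :
    Continuous (Th g γ w) :=
  (continuous_Fm hg hγw).norm.pow 2

theorem Th_eq_sum (u : Euc n) : Th g γ w u = ∑ k, Fm g γ w u k ^ 2 := by
  rw [Th, EuclideanSpace.norm_sq_eq]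
  simp only [Real.norm_eq_abs, sq_abs]

theorem Th_nonneg (g : Euc n → ℝ) (γ : ℝ) (w : Fin n → ℝ) (u : Euc n) : 0 ≤ Th g γ w u := by
  rw [Th]; positivity

theorem Th_eq_zero_iff {u : Euc n} : Th g γ w u = 0 ↔ Fm g γ w u = 0 := by
  rw [Th, sq_eq_zero_iff, norm_eq_zero]

end SoftThresholding

section Gradient

variable {F : Type*} [NormedAddCommGroup F] [InnerProductSpace ℝ F] [CompleteSpace F]
  {g : F → ℝ}

theorem ContDiff.contDiff_gradient (hg : ContDiff ℝ 2 g) : ContDiff ℝ 1 (gradient g) := by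
  have h1 : ContDiff ℝ 1 (fderiv ℝ g) := hg.fderiv_right le_rfl
  exact (InnerProductSpace.toDual ℝ F).symm.contDiff.comp h1

end Gradient

section StrongMonotonicity

variable {n : ℕ} {g : Euc n → ℝ} {c : ℝ}

theorem hasDerivAt_gradient_line (hg : ContDiff ℝ 2 g) (u d : Euc n) (t : ℝ) :
    HasDerivAt (fun s : ℝ => gradient g (u + s • d)) (hess g (u + t • d) d) t := by
  have hline : HasDerivAt (fun s : ℝ => u + s • d) d t := by
    simpa using ((hasDerivAt_id t).smul_const d).const_add u
  exact ((hg.contDiff_gradient.differentiable one_ne_zero) _).hasFDerivAt.comp_hasDerivAt t hline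

theorem mul_norm_sq_le_inner_gradient_sub (hg : ContDiff ℝ 2 g)
    (hlow : ∀ u h : Euc n, c * ‖h‖ ^ 2 ≤ ⟪hess g u h, h⟫) (u v : Euc n) :
    c * ‖u - v‖ ^ 2 ≤ ⟪gradient g u - gradient g v, u - v⟫ := by
  set h := u - v
  have hderiv (s : ℝ) : HasDerivAt (fun s : ℝ => ⟪gradient g (v + s • h), h⟫)
      ⟪hess g (v + s • h) h, h⟫ s := by
    simpa using (hasDerivAt_gradient_line hg v h s).inner ℝ (hasDerivAt_const s h)
  have key := mul_sub_le_image_sub_of_le_deriv (fun s => (hderiv s).differentiableAt)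
    (fun s => (hderiv s).deriv ▸ hlow _ h) zero_le_one
  simpa [h, inner_sub_left] using key

end StrongMonotonicity

section ZeroOfF

variable {n : ℕ} {g : Euc n → ℝ} {γ c : ℝ} {w : Fin n → ℝ}

/-- At a zero of `F`, `-∇g(u)_k` is a subgradient of `y ↦ w_k |y|` at `u_k`. -/
theorem mul_abs_le_of_Fm_eq_zero (hγ : 0 < γ) (hw : ∀ k, 0 ≤ w k) {u : Euc n}
    (hu : Fm g γ w u = 0) (k : Fin n) (y : ℝ) :
    w k * |u k| ≤ w k * |y| + gradient g u k * (y - u k) := by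
  have hγw : ∀ k, 0 ≤ γ * w k := fun k => mul_nonneg hγ.le (hw k)
  have h0 := congrArg (· k) hu
  simp only [Fm_apply hγw, PiLp.zero_apply] at h0
  set a := gradient g u k
  have hc := hγw k
  rcases lt_or_ge (γ * w k) (u k - γ * a) with h1 | h1
  · rw [max_eq_left (by linarith), max_eq_right (by linarith)] at h0
    have ha : a = -w k := mul_left_cancel₀ hγ.ne' (by linarith)
    rw [ha, abs_of_pos (by linarith)]
    nlinarith [le_abs_self y, hw k]
  rcases lt_or_ge (γ * w k) (γ * a - u k) with h2 | h2
  · rw [max_eq_right (by linarith), max_eq_left (by linarith)] at h0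
    have ha : a = w k := mul_left_cancel₀ hγ.ne' (by linarith)
    rw [ha, abs_of_neg (by linarith)]
    nlinarith [neg_abs_le y, hw k]
  · rw [max_eq_right (by linarith), max_eq_right (by linarith)] at h0
    have hu0 : u k = 0 := by linarith
    have ha : |a| ≤ w k := abs_le.mpr ⟨by nlinarith, by nlinarith⟩
    rw [hu0, abs_zero, mul_zero, sub_zero]
    nlinarith [neg_abs_le (a * y), abs_mul a y, abs_nonneg y]

theorem eq_of_Fm_eq_zero (hg : ContDiff ℝ 2 g) (hc : 0 < c)
    (hlow : ∀ u h : Euc n, c * ‖h‖ ^ 2 ≤ ⟪hess g u h, h⟫) (hγ : 0 < γ) (hw : ∀ k, 0 ≤ w k)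
    {u v : Euc n} (hu : Fm g γ w u = 0) (hv : Fm g γ w v = 0) : u = v := by
  have hmono : ⟪gradient g u - gradient g v, u - v⟫ ≤ 0 := by
    rw [PiLp.inner_apply]
    refine Finset.sum_nonpos fun k _ => ?_
    have huk := mul_abs_le_of_Fm_eq_zero hγ hw hu k (v k)
    have hvk := mul_abs_le_of_Fm_eq_zero hγ hw hv k (u k)
    simp only [PiLp.sub_apply, RCLike.inner_apply, conj_trivial]
    nlinarith
  have hsq : c * ‖u - v‖ ^ 2 ≤ 0 := (mul_norm_sq_le_inner_gradient_sub hg hlow u v).trans hmono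
  by_contra hne
  have := mul_pos hc (pow_pos (norm_pos_iff.mpr (sub_ne_zero.mpr hne)) 2)
  linarith

end ZeroOfF

/-- The right derivative of `t ↦ max (f t) 0` at a point where `f` takes the value `x` and has
derivative `y`. -/
def maxZeroRightDeriv (x y : ℝ) : ℝ :=
  if 0 < x then y else if x = 0 then max y 0 else 0

theorem HasDerivAt.hasDerivWithinAt_max_zero {f : ℝ → ℝ} {f' x : ℝ} (hf : HasDerivAt f f' x) :
    HasDerivWithinAt (fun t => max (f t) 0) (maxZeroRightDeriv (f x) f') (Ioi x) x := by
  unfold maxZeroRightDeriv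
  split_ifs with hpos hzero
  · refine (hf.congr_of_eventuallyEq ?_).hasDerivWithinAt
    filter_upwards [hf.continuousAt.eventually_const_lt hpos] with t ht
    exact max_eq_left ht.le
  · rw [hasDerivWithinAt_iff_tendsto_slope' self_notMem_Ioi]
    have hslope : Tendsto (slope f x) (𝓝[>] x) (𝓝 f') :=
      (hasDerivAt_iff_tendsto_slope.mp hf).mono_left (nhdsWithin_mono x fun t ht => ne_of_gt ht)
    refine (hslope.max tendsto_const_nhds).congr' ?_
    filter_upwards [self_mem_nhdsWithin] with t (ht : x < t)
    simp only [slope_def_field, hzero, max_self, sub_zero]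
    rw [← max_div_div_right (sub_pos.mpr ht).le, zero_div]
  · refine ((hasDerivAt_const x (0 : ℝ)).congr_of_eventuallyEq ?_).hasDerivWithinAt
    filter_upwards [hf.continuousAt.eventually_lt_const
      (lt_of_le_of_ne (not_lt.mp hpos) hzero)] with t ht
    exact max_eq_right ht.le

theorem maxZeroRightDeriv_of_pos {x : ℝ} (hx : 0 < x) (y : ℝ) : maxZeroRightDeriv x y = y :=
  if_pos hx

theorem maxZeroRightDeriv_zero (y : ℝ) : maxZeroRightDeriv 0 y = max y 0 := by
  simp [maxZeroRightDeriv]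

theorem maxZeroRightDeriv_of_neg {x : ℝ} (hx : x < 0) (y : ℝ) : maxZeroRightDeriv x y = 0 := by
  simp [maxZeroRightDeriv, hx.not_gt, hx.ne]

theorem max_sub_eq_left_of_mul_eq_zero {z r : ℝ} (hz : 0 ≤ z) (hr : 0 ≤ r) (hzr : z * r = 0) :
    max (z - r) 0 = z := by
  rcases mul_eq_zero.mp hzr with rfl | rfl
  · simp [hr]
  · simp [hz]

section Descent

variable {n : ℕ} {g : Euc n → ℝ} {γ : ℝ} {w : Fin n → ℝ}

theorem hasDerivWithinAt_Fm_line (hg : ContDiff ℝ 2 g) (hγw : ∀ k, 0 ≤ γ * w k)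
    (u d : Euc n) (k : Fin n) :
    HasDerivWithinAt (fun t : ℝ => Fm g γ w (u + t • d) k)
      (d k - maxZeroRightDeriv (u k - γ * gradient g u k - γ * w k) (d k - γ * hess g u d k)
        + maxZeroRightDeriv (γ * gradient g u k - u k - γ * w k) (γ * hess g u d k - d k))
      (Ioi 0) 0 := by
  have hline : HasDerivAt (fun t : ℝ => (u + t • d) k) (d k) 0 := by
    simpa using ((hasDerivAt_id (0 : ℝ)).mul_const (d k)).const_add (u k)
  have hgrad : HasDerivAt (fun t : ℝ => gradient g (u + t • d) k) (hess g u d k) 0 := by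
    have h := hasDerivAt_gradient_line hg u d 0
    rw [zero_smul, add_zero] at h
    exact (EuclideanSpace.proj k).hasFDerivAt.comp_hasDerivAt 0 h
  have hpos := ((hline.sub (hgrad.const_mul γ)).sub_const (γ * w k)).hasDerivWithinAt_max_zero
  have hneg := (((hgrad.const_mul γ).sub hline).sub_const (γ * w k)).hasDerivWithinAt_max_zero
  have h := (hline.hasDerivWithinAt.sub hpos).add hneg
  simp only [Pi.sub_apply, zero_smul, add_zero] at h
  exact h.congr (fun t _ => Fm_apply hγw _ k) (Fm_apply hγw _ k)

theorem IsBDir.rightDeriv_Fm_eq (hγ : 0 < γ) (hw : ∀ k, 0 < w k) {u d : Euc n}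
    (hd : IsBDir g γ w u d) (k : Fin n) :
    d k - maxZeroRightDeriv (u k - γ * gradient g u k - γ * w k) (d k - γ * hess g u d k)
      + maxZeroRightDeriv (γ * gradient g u k - u k - γ * w k) (γ * hess g u d k - d k)
      = -Fm g γ w u k := by
  obtain ⟨hA, hI, hIpl, hImi⟩ := hd
  have hc : 0 < γ * w k := mul_pos hγ (hw k)
  have hF := Fm_apply (g := g) (fun k => (mul_pos hγ (hw k)).le) u k
  set F := Fm g γ w u k
  set m := hess g u d k
  rcases lt_trichotomy (u k - γ * gradient g u k - γ * w k) 0 with hp | hp | hp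
  · rw [max_eq_right hp.le] at hF
    rw [maxZeroRightDeriv_of_neg hp]
    rcases lt_trichotomy (γ * gradient g u k - u k - γ * w k) 0 with hq | hq | hq
    · have := hI k (show _ ∧ _ from ⟨by linarith, by linarith⟩)
      rw [max_eq_right hq.le] at hF
      rw [maxZeroRightDeriv_of_neg hq]
      linarith
    · obtain ⟨hz, hr, hzr⟩ := hImi k (show u k = γ * gradient g u k - γ * w k by linarith)
      rw [hq, max_self] at hF
      have := max_sub_eq_left_of_mul_eq_zero (neg_nonneg.mpr hz) (neg_nonneg.mpr hr)
        (by linarith)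
      rw [hq, maxZeroRightDeriv_zero, show γ * m - d k = -(d k + u k) - -(γ * m + F) by
        rw [hF]; ring, this]
      linarith
    · have := hA k (Or.inr (show u k < γ * gradient g u k - γ * w k by linarith))
      rw [max_eq_left hq.le] at hF
      rw [maxZeroRightDeriv_of_pos hq]
      linarith
  · obtain ⟨hz, hr, hzr⟩ := hIpl k (show u k = γ * gradient g u k + γ * w k by linarith)
    have hq : γ * gradient g u k - u k - γ * w k < 0 := by linarith
    rw [hp, max_self, max_eq_right hq.le] at hF
    rw [hp, maxZeroRightDeriv_zero, maxZeroRightDeriv_of_neg hq,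
      show d k - γ * m = (d k + u k) - (γ * m + F) by rw [hF]; ring,
      max_sub_eq_left_of_mul_eq_zero hz hr hzr]
    linarith
  · have := hA k (Or.inl (show γ * gradient g u k + γ * w k < u k by linarith))
    have hq : γ * gradient g u k - u k - γ * w k < 0 := by linarith
    rw [max_eq_left hp.le, max_eq_right hq.le] at hF
    rw [maxZeroRightDeriv_of_pos hp, maxZeroRightDeriv_of_neg hq]
    linarith

theorem IsBDir.hasDerivWithinAt_Th_line (hg : ContDiff ℝ 2 g) (hγ : 0 < γ) (hw : ∀ k, 0 < w k)
    {u d : Euc n} (hd : IsBDir g γ w u d) :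
    HasDerivWithinAt (fun t : ℝ => Th g γ w (u + t • d)) (-2 * Th g γ w u) (Ioi 0) 0 := by
  have hF (k : Fin n) : HasDerivWithinAt (fun t : ℝ => Fm g γ w (u + t • d) k)
      (-Fm g γ w u k) (Ioi 0) 0 :=
    (hasDerivWithinAt_Fm_line hg (fun k => (mul_pos hγ (hw k)).le) u d k).congr_deriv
      (hd.rightDeriv_Fm_eq hγ hw k)
  have h := HasDerivWithinAt.fun_sum (u := Finset.univ) fun k _ => (hF k).pow 2
  simp only [zero_smul, add_zero] at h
  refine (h.congr (fun t _ => Th_eq_sum _) (Th_eq_sum _)).congr_deriv ?_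
  rw [Th_eq_sum, Finset.mul_sum]
  refine Finset.sum_congr rfl fun k _ => ?_
  push_cast
  ring

end Descent

section DirectionBound

variable {n : ℕ} {g : Euc n → ℝ} {γ c : ℝ} {w : Fin n → ℝ}

/-- On each index set one of the two factors vanishes: the residual `γ(Md)_k + F_k` on `A(u)`,
`d_k + u_k` on `I°(u)`, and their product on `I±(u)` by complementarity. -/
theorem IsBDir.inner_eq_zero {u d : Euc n} (hd : IsBDir g γ w u d) :
    ⟪γ • hess g u d + Fm g γ w u, d + u⟫ = 0 := by
  obtain ⟨hA, hI, hIpl, hImi⟩ := hd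
  rw [PiLp.inner_apply]
  refine Finset.sum_eq_zero fun k _ => ?_
  simp only [PiLp.add_apply, PiLp.smul_apply, smul_eq_mul, RCLike.inner_apply, conj_trivial]
  rcases lt_trichotomy (γ * gradient g u k + γ * w k) (u k) with h | h | h
  · rw [hA k (Or.inl h)]; ring
  · linarith [(hIpl k h.symm).2.2]
  rcases lt_trichotomy (u k) (γ * gradient g u k - γ * w k) with h' | h' | h'
  · rw [hA k (Or.inr h')]; ring
  · linarith [(hImi k h').2.2]
  · rw [hI k ⟨h', h⟩]; ring

theorem IsBDir.mul_norm_sq_le (hγ : 0 < γ) (hlow : ∀ u h : Euc n, c * ‖h‖ ^ 2 ≤ ⟪hess g u h, h⟫)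
    {u d : Euc n} (hd : IsBDir g γ w u d) :
    γ * c * ‖d‖ ^ 2 ≤ (‖Fm g γ w u‖ + γ * ‖fderiv ℝ (gradient g) u‖ * ‖u‖) * ‖d‖
      + ‖Fm g γ w u‖ * ‖u‖ := by
  have h0 := hd.inner_eq_zero
  simp only [inner_add_left, inner_add_right, inner_smul_left, conj_trivial] at h0
  have hMd : ‖hess g u d‖ ≤ ‖fderiv ℝ (gradient g) u‖ * ‖d‖ := (fderiv ℝ _ u).le_opNorm d
  have h1 := (neg_le_abs _).trans (abs_real_inner_le_norm (Fm g γ w u) d)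
  have h2 := (neg_le_abs _).trans (abs_real_inner_le_norm (Fm g γ w u) u)
  have h3 : -⟪hess g u d, u⟫ ≤ ‖fderiv ℝ (gradient g) u‖ * ‖d‖ * ‖u‖ :=
    (neg_le_abs _).trans ((abs_real_inner_le_norm _ _).trans
      (mul_le_mul_of_nonneg_right hMd (norm_nonneg u)))
  have h3' := mul_le_mul_of_nonneg_left h3 hγ.le
  have h4 := mul_le_mul_of_nonneg_left (hlow u d) hγ.le
  linarith

theorem exists_norm_le_of_isBDir (hg : ContDiff ℝ 2 g) (hc : 0 < c)
    (hlow : ∀ u h : Euc n, c * ‖h‖ ^ 2 ≤ ⟪hess g u h, h⟫) (hγ : 0 < γ) (hw : ∀ k, 0 ≤ w k)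
    {K : Set (Euc n)} (hK : IsCompact K) :
    ∃ C, ∀ u ∈ K, ∀ d, IsBDir g γ w u d → ‖d‖ ≤ C := by
  have hgrad := hg.contDiff_gradient
  obtain ⟨A, hA⟩ := hK.exists_bound_of_continuousOn
    (continuous_Fm hgrad.continuous fun k => mul_nonneg hγ.le (hw k)).continuousOn
  obtain ⟨N, hN⟩ := hK.exists_bound_of_continuousOn
    (hgrad.continuous_fderiv one_ne_zero).continuousOn
  obtain ⟨R, hR⟩ := hK.exists_bound_of_continuousOn continuous_id.continuousOn
  refine ⟨max 1 ((A + γ * N * R + A * R) / (γ * c)), fun u hu d hd => ?_⟩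
  rcases le_or_gt ‖d‖ 1 with h1 | h1
  · exact h1.trans (le_max_left _ _)
  refine le_max_of_le_right ((le_div_iff₀ (mul_pos hγ hc)).mpr ?_)
  have hFu := hA u hu
  have hNu := hN u hu
  have hRu : ‖u‖ ≤ R := hR u hu
  have hMu : γ * ‖fderiv ℝ (gradient g) u‖ * ‖u‖ ≤ γ * N * R :=
    mul_le_mul (mul_le_mul_of_nonneg_left hNu hγ.le) hRu (norm_nonneg _)
      (mul_nonneg hγ.le ((norm_nonneg _).trans hNu))
  have hquad := hd.mul_norm_sq_le hγ hlow
  have hF_le : ‖Fm g γ w u‖ * ‖u‖ ≤ A * R * ‖d‖ := by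
    calc ‖Fm g γ w u‖ * ‖u‖ ≤ A * R := by gcongr; exact (norm_nonneg _).trans hFu
      _ ≤ A * R * ‖d‖ := le_mul_of_one_le_right
          (mul_nonneg ((norm_nonneg _).trans hFu) ((norm_nonneg _).trans hRu)) h1.le
  nlinarith [norm_nonneg d]

end DirectionBound

section ArmijoLimit

variable {E : Type*} [NormedAddCommGroup E] {f D : E → ℝ} {x : E}

theorem exists_abs_sub_sub_le_of_tendsto
    (hstrict : Tendsto (fun p : E × E => (f p.1 - f p.2 - D (p.1 - p.2)) / ‖p.1 - p.2‖)
      (𝓝[{p : E × E | p.1 ≠ p.2}] (x, x)) (𝓝 0))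
    (hD0 : D 0 = 0) {ε : ℝ} (hε : 0 < ε) :
    ∃ δ > 0, ∀ a b, dist a x < δ → dist b x < δ →
      |f a - f b - D (a - b)| ≤ ε * ‖a - b‖ := by
  obtain ⟨δ, hδ, hball⟩ := Metric.tendsto_nhdsWithin_nhds.mp hstrict ε hε
  refine ⟨δ, hδ, fun a b ha hb => ?_⟩
  rcases eq_or_ne a b with rfl | hab
  · simp [hD0]
  have hpos : 0 < ‖a - b‖ := norm_pos_iff.mpr (sub_ne_zero.mpr hab)
  have h := hball (x := (a, b)) hab (by simp [Prod.dist_eq, ha, hb])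
  rw [Real.dist_eq, sub_zero, abs_div, abs_of_pos hpos, div_lt_iff₀ hpos] at h
  exact h.le

variable [NormedSpace ℝ E]

theorem dirDeriv_smul
    (hD : ∀ h, Tendsto (fun t : ℝ => (f (x + t • h) - f x) / t) (𝓝[>] 0) (𝓝 (D h)))
    {s : ℝ} (hs : 0 < s) (h : E) : D (s • h) = s * D h := by
  have hmul : Tendsto (fun t : ℝ => t * s) (𝓝[>] 0) (𝓝[>] 0) := by
    refine tendsto_nhdsWithin_of_tendsto_nhds_of_eventually_within _ ?_ ?_
    · have h0 : Tendsto (fun t : ℝ => t * s) (𝓝 0) (𝓝 0) := by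
        simpa using (continuous_mul_const s).tendsto 0
      exact h0.mono_left nhdsWithin_le_nhds
    · filter_upwards [self_mem_nhdsWithin] with t (ht : 0 < t) using mul_pos ht hs
  refine tendsto_nhds_unique (hD (s • h)) (((hD h).comp hmul).const_mul s |>.congr' ?_)
  filter_upwards [self_mem_nhdsWithin] with t (ht : 0 < t)
  simp only [Function.comp, smul_smul, mul_comm t s]
  field_simp

/-- The rejected step bounds `D e` from below by `-2σ f(v)`, the right derivative bounds it from
above by `-2 f(v)`, both up to `ε‖e‖`. -/
theorem one_sub_mul_le_of_armijo_fails (hhom : ∀ s > 0, ∀ h, D (s • h) = s * D h)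
    {δ ε σ s : ℝ} {v e : E}
    (hest : ∀ a b, dist a x < δ → dist b x < δ → |f a - f b - D (a - b)| ≤ ε * ‖a - b‖)
    (hv : dist v x < δ) (hs : 0 < s) (hvs : dist (v + s • e) x < δ)
    (hfail : (1 - 2 * σ * s) * f v < f (v + s • e))
    (hdesc : HasDerivWithinAt (fun t : ℝ => f (v + t • e)) (-2 * f v) (Ioi 0) 0) :
    (1 - σ) * f v ≤ ε * ‖e‖ := by
  have hline (t : ℝ) (ht : 0 < t) (htδ : dist (v + t • e) x < δ) :
      |f (v + t • e) - f v - t * D e| ≤ ε * (t * ‖e‖) := by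
    have h := hest _ _ htδ hv
    rwa [add_sub_cancel_left, hhom t ht, norm_smul, Real.norm_of_nonneg ht.le] at h
  have hupper : D e - ε * ‖e‖ ≤ -2 * f v := by
    rw [hasDerivWithinAt_iff_tendsto_slope' self_notMem_Ioi] at hdesc
    refine ge_of_tendsto hdesc ?_
    have hnear : ∀ᶠ t in 𝓝 (0 : ℝ), dist (v + t • e) x < δ := by
      have hcont : Continuous fun t : ℝ => v + t • e := by fun_prop
      exact hcont.continuousAt.eventually (Metric.isOpen_ball.mem_nhds (by simpa using hv))
    filter_upwards [self_mem_nhdsWithin, nhdsWithin_le_nhds hnear] with t (ht : 0 < t) htδ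
    have h := abs_le.mp (hline t ht htδ)
    rw [slope_def_field, zero_smul, add_zero, sub_zero, le_div_iff₀ ht]
    nlinarith [h.1]
  have hlower : -2 * σ * f v < D e + ε * ‖e‖ := by
    have h := (abs_le.mp (hline s hs hvs)).2
    have : s * (-2 * σ * f v) < s * (D e + ε * ‖e‖) := by nlinarith
    exact lt_of_mul_lt_mul_left this hs.le
  linarith

theorem one_sub_mul_nonpos_of_armijo_fails
    (hD : ∀ h, Tendsto (fun t : ℝ => (f (x + t • h) - f x) / t) (𝓝[>] 0) (𝓝 (D h)))
    (hstrict : Tendsto (fun p : E × E => (f p.1 - f p.2 - D (p.1 - p.2)) / ‖p.1 - p.2‖)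
      (𝓝[{p : E × E | p.1 ≠ p.2}] (x, x)) (𝓝 0))
    (hf : ContinuousAt f x) {σ C : ℝ} {v e : ℕ → E} {s : ℕ → ℝ}
    (hv : Tendsto v atTop (𝓝 x)) (he : ∀ j, ‖e j‖ ≤ C) (hs : Tendsto s atTop (𝓝[>] 0))
    (hfail : ∀ᶠ j in atTop, (1 - 2 * σ * s j) * f (v j) < f (v j + s j • e j))
    (hdesc : ∀ j, HasDerivWithinAt (fun t : ℝ => f (v j + t • e j)) (-2 * f (v j)) (Ioi 0) 0) :
    (1 - σ) * f x ≤ 0 := by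
  have hhom : ∀ s > 0, ∀ h, D (s • h) = s * D h := fun s hs => dirDeriv_smul hD hs
  have hD0 : D 0 = 0 := by
    have h := hhom 2 two_pos 0
    rw [smul_zero] at h
    linarith
  have hC : 0 ≤ C := (norm_nonneg _).trans (he 0)
  refine le_of_forall_pos_le_add fun ε hε => ?_
  obtain ⟨δ, hδ, hest⟩ := exists_abs_sub_sub_le_of_tendsto hstrict hD0 (div_pos hε
    (by linarith : (0 : ℝ) < C + 1))
  have hs0 : Tendsto s atTop (𝓝 0) := tendsto_nhds_of_tendsto_nhdsWithin hs
  have hsC : ∀ᶠ j in atTop, s j * C < δ / 2 := by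
    simpa using (hs0.mul_const C).eventually (gt_mem_nhds (by simpa using half_pos hδ))
  have hbound : ∀ᶠ j in atTop, (1 - σ) * f (v j) ≤ ε := by
    filter_upwards [hv.eventually (Metric.ball_mem_nhds x (half_pos hδ)), hsC, hfail,
      hs.eventually self_mem_nhdsWithin] with j hvj hsj hfj (hpos : 0 < s j)
    have hvs : dist (v j + s j • e j) x < δ := by
      calc dist (v j + s j • e j) x ≤ dist (v j) x + ‖s j • e j‖ := by
            rw [dist_eq_norm, dist_eq_norm, add_sub_right_comm]; exact norm_add_le _ _
        _ < δ := by
          rw [norm_smul, Real.norm_of_nonneg hpos.le]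
          nlinarith [mul_le_mul_of_nonneg_left (he j) hpos.le, Metric.mem_ball.mp hvj]
    calc (1 - σ) * f (v j) ≤ ε / (C + 1) * ‖e j‖ :=
          one_sub_mul_le_of_armijo_fails hhom hest (by linarith [Metric.mem_ball.mp hvj]) hpos
            hvs hfj (hdesc j)
      _ ≤ ε := by
          rw [div_mul_eq_mul_div, div_le_iff₀ (by linarith)]
          nlinarith [he j]
  simpa using le_of_tendsto ((hf.tendsto.comp hv).const_mul (1 - σ)) hbound

end ArmijoLimit

theorem IsCompact.exists_tendsto_of_tendsto_zero {X : Type*} [TopologicalSpace X] {f : X → ℝ}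
    (hf : Continuous f) (huniq : ∀ a b, f a = 0 → f b = 0 → a = b) {K : Set X}
    (hK : IsCompact K) {u : ℕ → X} (huK : ∀ j, u j ∈ K) (hu : Tendsto (f ∘ u) atTop (𝓝 0)) :
    ∃ z, Tendsto u atTop (𝓝 z) ∧ f z = 0 := by
  have hzero (z : X) (hz : MapClusterPt z atTop u) : f z = 0 :=
    eq_of_nhds_neBot ((hz.continuousAt_comp hf.continuousAt).clusterPt.mono hu)
  obtain ⟨z, -, hz⟩ := hK.exists_mapClusterPt (f := atTop) (tendsto_principal.mpr (.of_forall huK))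
  exact ⟨z, hK.tendsto_nhds_of_unique_mapClusterPt (.of_forall huK) fun y _ hy =>
    huniq y z (hzero y hy) (hzero z hz), hzero z hz⟩

theorem tendsto_zero_of_antitone_of_frequently_le_mul {a : ℕ → ℝ} (ha : Antitone a)
    (ha0 : ∀ j, 0 ≤ a j) {q : ℝ} (hq : q < 1) (hfreq : ∃ᶠ j in atTop, a (j + 1) ≤ q * a j) :
    Tendsto a atTop (𝓝 0) := by
  have hlim := tendsto_atTop_ciInf ha ⟨0, by rintro _ ⟨j, rfl⟩; exact ha0 j⟩
  have hpair : Tendsto (fun j => (a (j + 1), a j)) atTop (𝓝 (⨅ j, a j, ⨅ j, a j)) :=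
    (hlim.comp (tendsto_add_atTop_nat 1)).prodMk_nhds hlim
  have hle : ⨅ j, a j ≤ q * ⨅ j, a j :=
    (isClosed_le continuous_fst (continuous_const.mul continuous_snd)).mem_of_frequently_of_tendsto
      hfreq hpair
  have hinf : ⨅ j, a j = 0 :=
    le_antisymm (by nlinarith [le_ciInf ha0]) (le_ciInf ha0)
  rwa [hinf] at hlim

section Iteration

variable {n : ℕ} {g : Euc n → ℝ} {γ : ℝ} {w : Fin n → ℝ} {β σ : ℝ}

theorem ArmijoStepsize.pos {u d : Euc n} {t : ℝ} (h : ArmijoStepsize g γ w β σ u d t)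
    (hβ : 0 < β) : 0 < t := by
  obtain ⟨l, rfl, -⟩ := h
  exact pow_pos hβ l

theorem ArmijoStepsize.le_one {u d : Euc n} {t : ℝ} (h : ArmijoStepsize g γ w β σ u d t)
    (hβ0 : 0 ≤ β) (hβ1 : β ≤ 1) : t ≤ 1 := by
  obtain ⟨l, rfl, -⟩ := h
  exact pow_le_one₀ hβ0 hβ1

/-- Below the full step, the previous trial step `t / β` failed the Armijo test. -/
theorem ArmijoStepsize.lt_Th_add_div {u d : Euc n} {t : ℝ} (h : ArmijoStepsize g γ w β σ u d t)
    (hβ : β ≠ 0) (ht : t < 1) :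
    (1 - 2 * σ * (t / β)) * Th g γ w u < Th g γ w (u + (t / β) • d) := by
  obtain ⟨l, rfl, -, hmin⟩ := h
  obtain ⟨m, rfl⟩ : ∃ m, l = m + 1 :=
    Nat.exists_eq_succ_of_ne_zero (by rintro rfl; simp at ht)
  rw [pow_succ, mul_div_cancel_right₀ _ hβ]
  exact not_le.mp (hmin m m.lt_succ_self)

variable {useq dseq : ℕ → Euc n} {tseq : ℕ → ℝ}

theorem BIter.Th_succ_le (h : BIter g γ w β σ useq dseq tseq) (j : ℕ) :
    Th g γ w (useq (j + 1)) ≤ (1 - 2 * σ * tseq j) * Th g γ w (useq j) := by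
  obtain ⟨l, hl, hle, -⟩ := h.2.1 j
  rw [h.2.2 j, hl]
  exact hle

theorem BIter.antitone_Th (h : BIter g γ w β σ useq dseq tseq) (hβ : 0 < β) (hσ : 0 < σ) :
    Antitone fun j => Th g γ w (useq j) := by
  refine antitone_nat_of_succ_le fun j => (h.Th_succ_le j).trans ?_
  have := mul_nonneg (mul_nonneg hσ.le ((h.2.1 j).pos hβ).le) (Th_nonneg g γ w (useq j))
  linarith

theorem BIter.tendsto_Th_zero_of_limsup_pos (h : BIter g γ w β σ useq dseq tseq)
    (hβ : 0 < β) (hσ : 0 < σ) (hL : 0 < limsup tseq atTop) :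
    Tendsto (fun j => Th g γ w (useq j)) atTop (𝓝 0) := by
  have hcob : IsCoboundedUnder (· ≤ ·) atTop tseq :=
    isBoundedUnder_of ⟨0, fun j => ((h.2.1 j).pos hβ).le⟩ |>.isCoboundedUnder_le
  refine tendsto_zero_of_antitone_of_frequently_le_mul (q := 1 - σ * limsup tseq atTop)
    (h.antitone_Th hβ hσ) (fun j => Th_nonneg g γ w (useq j)) (by nlinarith) ?_
  refine (frequently_lt_of_lt_limsup hcob (half_lt_self hL)).mono fun j hj => ?_
  have := mul_le_mul_of_nonneg_left hj.le (mul_nonneg hσ.le (Th_nonneg g γ w (useq j)))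
  nlinarith [h.Th_succ_le j]

theorem BIter.Th_eq_zero_of_limsup_eq_zero {c : ℝ} (hg : ContDiff ℝ 2 g) (hc : 0 < c)
    (hlow : ∀ u h : Euc n, c * ‖h‖ ^ 2 ≤ ⟪hess g u h, h⟫) (hγ : 0 < γ) (hw : ∀ k, 0 < w k)
    (h : BIter g γ w β σ useq dseq tseq) (hβ : β ∈ Ioo 0 1) (hσ : σ < 1)
    {K : Set (Euc n)} (hK : IsCompact K) (huK : ∀ j, useq j ∈ K)
    (hL : limsup tseq atTop = 0) {ustar : Euc n} {D : Euc n → ℝ} {φ : ℕ → ℕ}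
    (hφ : StrictMono φ) (hu : Tendsto (useq ∘ φ) atTop (𝓝 ustar))
    (hD : ∀ h : Euc n, Tendsto (fun t : ℝ => (Th g γ w (ustar + t • h) - Th g γ w ustar) / t)
      (𝓝[>] 0) (𝓝 (D h)))
    (hstrict : Tendsto (fun p : Euc n × Euc n =>
        (Th g γ w p.1 - Th g γ w p.2 - D (p.1 - p.2)) / ‖p.1 - p.2‖)
      (𝓝[{p : Euc n × Euc n | p.1 ≠ p.2}] (ustar, ustar)) (𝓝 0)) :
    Th g γ w ustar = 0 := by
  obtain ⟨C, hC⟩ := exists_norm_le_of_isBDir hg hc hlow hγ (fun k => (hw k).le) hK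
  have hpos (j : ℕ) : 0 < tseq j := (h.2.1 j).pos hβ.1
  have hbdd : IsBoundedUnder (· ≤ ·) atTop tseq :=
    isBoundedUnder_of ⟨1, fun j => (h.2.1 j).le_one hβ.1.le hβ.2.le⟩
  have ht : Tendsto (fun j => tseq (φ j)) atTop (𝓝 0) :=
    (tendsto_of_le_liminf_of_limsup_le
      (le_liminf_of_le hbdd.isCoboundedUnder_ge (.of_forall fun j => (hpos j).le)) hL.le hbdd
      (isBoundedUnder_of ⟨0, fun j => (hpos j).le⟩)).comp hφ.tendsto_atTop
  have hs : Tendsto (fun j => tseq (φ j) / β) atTop (𝓝[>] 0) :=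
    tendsto_nhdsWithin_iff.mpr ⟨by simpa using ht.div_const β,
      .of_forall fun j => div_pos (hpos _) hβ.1⟩
  have hfail : ∀ᶠ j in atTop, (1 - 2 * σ * (tseq (φ j) / β)) * Th g γ w (useq (φ j))
      < Th g γ w (useq (φ j) + (tseq (φ j) / β) • dseq (φ j)) := by
    filter_upwards [ht.eventually (gt_mem_nhds one_pos)] with j hj
    exact (h.2.1 (φ j)).lt_Th_add_div hβ.1.ne' hj
  have hcont := continuous_Th hg.contDiff_gradient.continuous fun k => (mul_pos hγ (hw k)).le
  have key := one_sub_mul_nonpos_of_armijo_fails hD hstrict hcont.continuousAt hu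
    (fun j => hC _ (huK _) _ (h.1 (φ j))) hs hfail
    (fun j => (h.1 (φ j)).hasDerivWithinAt_Th_line hg hγ hw)
  exact le_antisymm (by nlinarith) (Th_nonneg g γ w ustar)

end Iteration

theorem stmt15_general {n : ℕ} (c₁ c₂ : ℝ) (g : Euc n → ℝ) (hg : Assump n g c₁ c₂)
    (w : Fin n → ℝ) (hw : ∀ k, 0 < w k) (γ : ℝ) (hγ : 0 < γ)
    (β σ : ℝ) (hβ : β ∈ Set.Ioo (0 : ℝ) 1) (hσ : σ ∈ Set.Ioo (0 : ℝ) (1 / 2))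
    (useq dseq : ℕ → Euc n) (tseq : ℕ → ℝ)
    (hiter : BIter g γ w β σ useq dseq tseq)
    (hcpt : IsCompact {x : Euc n | Th g γ w x ≤ Th g γ w (useq 0)}) :
    (0 < Filter.limsup tseq atTop →
      ∃ ustar : Euc n, Tendsto useq atTop (𝓝 ustar) ∧ Th g γ w ustar = 0) ∧
    (Filter.limsup tseq atTop = 0 →
      ∀ (ustar : Euc n) (DTh : Euc n → ℝ),
        (∃ φ : ℕ → ℕ, StrictMono φ ∧ Tendsto (useq ∘ φ) atTop (𝓝 ustar)) →
        (∀ h : Euc n,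
          Tendsto (fun t : ℝ => (Th g γ w (ustar + t • h) - Th g γ w ustar) / t)
            (𝓝[>] 0) (𝓝 (DTh h))) →
        Tendsto
          (fun p : Euc n × Euc n =>
            (Th g γ w p.1 - Th g γ w p.2 - DTh (p.1 - p.2)) / ‖p.1 - p.2‖)
          (𝓝[{p : Euc n × Euc n | p.1 ≠ p.2}] (ustar, ustar)) (𝓝 0) →
        Tendsto useq atTop (𝓝 ustar) ∧ Th g γ w ustar = 0) := by
  have hanti := hiter.antitone_Th hβ.1 hσ.1
  have hK (j : ℕ) : useq j ∈ {x : Euc n | Th g γ w x ≤ Th g γ w (useq 0)} :=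
    hanti (Nat.zero_le j)
  have hcont := continuous_Th hg.contDiff.contDiff_gradient.continuous
    fun k => (mul_pos hγ (hw k)).le
  have hconv := hcpt.exists_tendsto_of_tendsto_zero hcont (fun a b ha hb =>
    eq_of_Fm_eq_zero hg.contDiff hg.c1_pos hg.lower hγ (fun k => (hw k).le)
      (Th_eq_zero_iff.mp ha) (Th_eq_zero_iff.mp hb)) hK
  refine ⟨fun hL => hconv (hiter.tendsto_Th_zero_of_limsup_pos hβ.1 hσ.1 hL), ?_⟩
  rintro hL ustar DTh ⟨φ, hφ, hu⟩ hD hstrict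
  have hzero : Th g γ w ustar = 0 :=
    hiter.Th_eq_zero_of_limsup_eq_zero hg.contDiff hg.c1_pos hg.lower hγ hw hβ
      (by linarith [hσ.2]) hcpt hK hL hφ hu hD hstrict
  have hTh : Tendsto (fun j => Th g γ w (useq j)) atTop (𝓝 0) :=
    (tendsto_iff_tendsto_subseq_of_antitone hanti hφ.tendsto_atTop).mpr
      (hzero ▸ (hcont.tendsto ustar).comp hu)
  obtain ⟨z, hz, -⟩ := hconv hTh
  obtain rfl := tendsto_nhds_unique (hz.comp hφ.tendsto_atTop) hu
  exact ⟨hz, hzero⟩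

/-- global convergence of the B-semismooth Newton method
(unmodified index sets): (i) if the stepsizes do not tend to zero, the iterates
converge to a zero of `Θ`; (ii) if they do tend to zero and the technical
condition on `Θ` holds at an accumulation point `u*`, the iterates converge to
`u*` and `Θ(u*) = 0`. -/
theorem stmt15 {n : ℕ} (hn : 1 ≤ n) (c₁ c₂ : ℝ) (g : Euc n → ℝ) (hg : Assump n g c₁ c₂)
    (w : Fin n → ℝ) (hw : ∀ k, 0 < w k) (γ : ℝ) (hγ : 0 < γ)
    (β σ : ℝ) (hβ : β ∈ Set.Ioo (0 : ℝ) 1) (hσ : σ ∈ Set.Ioo (0 : ℝ) (1 / 2))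
    (useq dseq : ℕ → Euc n) (tseq : ℕ → ℝ)
    (hiter : BIter g γ w β σ useq dseq tseq)
    (hpos : ∀ j, 0 < Th g γ w (useq j))
    (hcpt : IsCompact {x : Euc n | Th g γ w x ≤ Th g γ w (useq 0)}) :
    (0 < Filter.limsup tseq atTop →
      ∃ ustar : Euc n, Tendsto useq atTop (𝓝 ustar) ∧ Th g γ w ustar = 0) ∧
    (Filter.limsup tseq atTop = 0 →
      ∀ (ustar : Euc n) (DTh : Euc n → ℝ),
        (∃ φ : ℕ → ℕ, StrictMono φ ∧ Tendsto (useq ∘ φ) atTop (𝓝 ustar)) →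
        (∀ h : Euc n,
          Tendsto (fun t : ℝ => (Th g γ w (ustar + t • h) - Th g γ w ustar) / t)
            (𝓝[>] 0) (𝓝 (DTh h))) →
        Tendsto
          (fun p : Euc n × Euc n =>
            (Th g γ w p.1 - Th g γ w p.2 - DTh (p.1 - p.2)) / ‖p.1 - p.2‖)
          (𝓝[{p : Euc n × Euc n | p.1 ≠ p.2}] (ustar, ustar)) (𝓝 0) →
        Tendsto useq atTop (𝓝 ustar) ∧ Th g γ w ustar = 0) :=
  stmt15_general c₁ c₂ g hg w hw γ hγ β σ hβ hσ useq dseq tseq hiter hcpt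
end
end

section
/- Suppose u* ∈ ℝⁿ satisfies F(u*) = 0 and I⁺(u*) ∪ I⁻(u*) = ∅. Then there exists a neighborhood U of u* such that for every u ∈ U the subsets A⁺₊(u), A⁻₋(u), I°₊(u), I°₋(u) are empty; in particular, the modified index sets coincide with the original index sets for all u ∈ U. -/
open scoped RealInnerProductSpace
open Filter Topology

noncomputable section

variable {n : ℕ}

/-!
At a zero `u*` of `F`, each coordinate is in one of three situations: `k ∈ A⁺(u*)`, where
`F_k(u*) = 0` forces `γ∇g(u*)_k + γw_k = 0 < u*_k`; `k ∈ A⁻(u*)`, where it forces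
`γ∇g(u*)_k − γw_k = 0 > u*_k`; or `k ∈ I°(u*)`, where it forces `u*_k = 0`, so that
`γ∇g(u*)_k − γw_k < 0 < γ∇g(u*)_k + γw_k`. Since `I^±(u*) = ∅`, these are strict inequalities
between continuous functions of `u`, so they persist near `u*`, and each of them rules out
membership of `k` in `A⁺₊(u)`, `A⁻₋(u)`, `I°₊(u)` and `I°₋(u)`.
-/

theorem ContDiff.continuous_gradient {F : Type*} [NormedAddCommGroup F] [InnerProductSpace ℝ F]
    [CompleteSpace F] {f : F → ℝ} {m : WithTop ℕ∞} (hf : ContDiff ℝ m f) (hm : m ≠ 0) :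
    Continuous (gradient f) :=
  (InnerProductSpace.toDual ℝ F).symm.continuous.comp (hf.continuous_fderiv hm)

/-- Stands for `(a, b) = (u_k, γ∇g(u)_k)` with threshold `c = γw_k`. -/
def SignStable (c a b : ℝ) : Prop :=
  (b + c < a ∧ 0 < a) ∨ (a < b - c ∧ a < 0) ∨ (b - c < 0 ∧ 0 < b + c)

theorem isOpen_setOf_signStable (c : ℝ) : IsOpen {p : ℝ × ℝ | SignStable c p.1 p.2} := by
  simp only [SignStable, Set.ofPred_or, Set.ofPred_and]
  refine ((isOpen_lt ?_ ?_).inter (isOpen_lt ?_ ?_)).union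
    (((isOpen_lt ?_ ?_).inter (isOpen_lt ?_ ?_)).union ((isOpen_lt ?_ ?_).inter (isOpen_lt ?_ ?_)))
    <;> fun_prop

theorem ContinuousAt.eventually_signStable {X : Type*} [TopologicalSpace X] {a b : X → ℝ}
    {x₀ : X} (ha : ContinuousAt a x₀) (hb : ContinuousAt b x₀) {c : ℝ}
    (h : SignStable c (a x₀) (b x₀)) : ∀ᶠ x in 𝓝 x₀, SignStable c (a x) (b x) :=
  (ha.prodMk_nhds hb).eventually ((isOpen_setOf_signStable c).mem_nhds h)

theorem signStable_of_eq_sign_mul_max {a b c : ℝ} (hc : 0 < c)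
    (hfix : a = Real.sign (a - b) * max (|a - b| - c) 0) (hne_add : a ≠ b + c)
    (hne_sub : a ≠ b - c) : SignStable c a b := by
  rcases lt_trichotomy (a - b) (-c) with hlt | heq | hgt
  · have hab : a - b < 0 := by linarith
    rw [Real.sign_of_neg hab, abs_of_neg hab, max_eq_left (by linarith)] at hfix
    exact Or.inr (Or.inl ⟨by linarith, by linarith⟩)
  · exact absurd (by linarith) hne_sub
  rcases lt_trichotomy (a - b) c with hlt | heq | hgt'
  · rw [max_eq_right (by linarith [abs_lt.2 ⟨hgt, hlt⟩]), mul_zero] at hfix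
    exact Or.inr (Or.inr ⟨by linarith, by linarith⟩)
  · exact absurd (by linarith) hne_add
  · have hab : 0 < a - b := by linarith
    rw [Real.sign_of_pos hab, abs_of_pos hab, max_eq_left (by linarith), one_mul] at hfix
    exact Or.inl ⟨by linarith, by linarith⟩

section IndexSets

variable {g : Euc n → ℝ} {γ : ℝ} {w : Fin n → ℝ} {u : Euc n}

theorem signStable_of_Fm_eq_zero (hw : ∀ k, 0 < w k) (hγ : 0 < γ) (hz : Fm g γ w u = 0)
    (hs : Ipl g γ w u ∪ Imi g γ w u = ∅) (k : Fin n) :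
    SignStable (γ * w k) (u k) (γ * gradient g u k) := by
  have hfix : u k = Real.sign (u k - γ * gradient g u k) *
      max (|u k - γ * gradient g u k| - γ * w k) 0 := by
    have := congrArg (· k) hz
    simpa [Fm, soft, sub_eq_zero] using this
  have hk : k ∉ Ipl g γ w u ∪ Imi g γ w u := hs ▸ Set.notMem_empty k
  simp only [Set.mem_union, Ipl, Imi, Set.mem_ofPred_eq, not_or] at hk
  exact signStable_of_eq_sign_mul_max (mul_pos hγ (hw k)) hfix hk.1 hk.2

theorem extraIndexSets_eq_empty (hc : ∀ k, 0 < γ * w k)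
    (hu : ∀ k, SignStable (γ * w k) (u k) (γ * gradient g u k)) :
    App g γ w u = ∅ ∧ Amm g γ w u = ∅ ∧ Izp g γ w u = ∅ ∧ Izm g γ w u = ∅ := by
  simp only [Set.eq_empty_iff_forall_notMem, App, Amm, Izp, Izm, Set.mem_ofPred_eq]
  refine ⟨fun k hk => ?_, fun k hk => ?_, fun k hk => ?_, fun k hk => ?_⟩ <;>
    rcases hu k with h | h | h <;> linarith [hc k, h.1, h.2]

end IndexSets

theorem stmt16_general {n : ℕ} (c₁ c₂ : ℝ) (g : Euc n → ℝ) (hg : Assump n g c₁ c₂)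
    (w : Fin n → ℝ) (hw : ∀ k, 0 < w k) (γ : ℝ) (hγ : 0 < γ)
    (ustar : Euc n) (hz : Fm g γ w ustar = 0)
    (hs : Ipl g γ w ustar ∪ Imi g γ w ustar = ∅) :
    ∃ U ∈ 𝓝 ustar, ∀ u ∈ U,
      App g γ w u = ∅ ∧ Amm g γ w u = ∅ ∧ Izp g γ w u = ∅ ∧ Izm g γ w u = ∅ ∧
      ApBar g γ w u = Ap g γ w u ∧ AmBar g γ w u = Am g γ w u ∧
      IzBar g γ w u = Iz g γ w u ∧ IplBar g γ w u = Ipl g γ w u ∧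
      ImiBar g γ w u = Imi g γ w u := by
  have hgrad : Continuous (gradient g) := hg.contDiff.continuous_gradient (by norm_num)
  have hstable : ∀ᶠ u in 𝓝 ustar, ∀ k, SignStable (γ * w k) (u k) (γ * gradient g u k) :=
    eventually_all.2 fun k =>
      ContinuousAt.eventually_signStable (by fun_prop) (by fun_prop)
        (signStable_of_Fm_eq_zero hw hγ hz hs k)
  refine ⟨_, hstable, fun u hu => ?_⟩
  obtain ⟨hApp, hAmm, hIzp, hIzm⟩ :=
    extraIndexSets_eq_empty (fun k => mul_pos hγ (hw k)) hu
  refine ⟨hApp, hAmm, hIzp, hIzm, ?_, ?_, ?_, ?_, ?_⟩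
  · rw [ApBar, hApp, Set.sdiff_empty]
  · rw [AmBar, hAmm, Set.sdiff_empty]
  · rw [IzBar, hIzp, hIzm, Set.empty_union, Set.sdiff_empty]
  · rw [IplBar, hApp, hIzp, Set.union_empty, Set.union_empty]
  · rw [ImiBar, hAmm, hIzm, Set.union_empty, Set.union_empty]

/-- near a zero `u*` of `F` with `I⁺(u*) ∪ I⁻(u*) = ∅`, the extra
subsets are empty, so the modified index sets coincide with the original ones. -/
theorem stmt16 {n : ℕ} (hn : 1 ≤ n) (c₁ c₂ : ℝ) (g : Euc n → ℝ) (hg : Assump n g c₁ c₂)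
    (w : Fin n → ℝ) (hw : ∀ k, 0 < w k) (γ : ℝ) (hγ : 0 < γ)
    (ustar : Euc n) (hz : Fm g γ w ustar = 0)
    (hs : Ipl g γ w ustar ∪ Imi g γ w ustar = ∅) :
    ∃ U ∈ 𝓝 ustar, ∀ u ∈ U,
      App g γ w u = ∅ ∧ Amm g γ w u = ∅ ∧ Izp g γ w u = ∅ ∧ Izm g γ w u = ∅ ∧
      ApBar g γ w u = Ap g γ w u ∧ AmBar g γ w u = Am g γ w u ∧
      IzBar g γ w u = Iz g γ w u ∧ IplBar g γ w u = Ipl g γ w u ∧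
      ImiBar g γ w u = Imi g γ w u :=
  stmt16_general c₁ c₂ g hg w hw γ hγ ustar hz hs
end
end
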